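/- Let a_1 < a_2 < ... < a_n be positive integers with a_i ≤ 2i - 1 for all i, corresponding to a Young diagram Y(a) whose (n+1-i)-th row from the top has length a_i - i. Then 1/H_{Y(a)} equals the n×n determinant with (i,j) entry 1/(a_i - j)!, where 1/m! is interpreted as 0 when m < 0. -/

import Mathlib

/-- The hook length of the box `u` in the cell set `c`. -/
def hookLen (c : Finset (ℕ × ℕ)) (u : ℕ × ℕ) : ℕ :=
  (c.filter fun v => v.1 = u.1 ∧ u.2 ≤ v.2).card +
  (c.filter fun v => v.2 = u.2 ∧ u.1 < v.1).card

/-- The product of all hook lengths of a cell set. -/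
def hookProd (c : Finset (ℕ × ℕ)) : ℕ := ∏ u ∈ c, hookLen c u

/-- Totalization of a sequence `a : Fin n → ℕ` to `ℕ → ℕ` (value `0` out of range). -/
def extSeq (n : ℕ) (a : Fin n → ℕ) : ℕ → ℕ := fun m => if h : m < n then a ⟨m, h⟩ else 0

/-- The Young diagram `Y(a)` associated to a sequence `a₁ < ⋯ < aₙ` (0-indexed here):
its `(n+1-i)`-th row from the top has `aᵢ - i` boxes. Rows and columns are 0-indexed. -/
def cellsOf (n : ℕ) (a : Fin n → ℕ) : Finset (ℕ × ℕ) :=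
  ((Finset.range n) ×ˢ (Finset.range (2 * n))).filter fun u =>
    u.2 < extSeq n a (n - 1 - u.1) - (n - u.1)

/-!
Put `bᵢ = aᵢ - 1`, the first-column hook lengths of `Y(a)`. In the row of `Y(a)` belonging to
`bₖ`, the `c`-th box has hook length `bₖ - g(c)`, where `g(c) = c + #{j < k | bⱼ - j ≤ c}`
enumerates the complement of `{bⱼ | j < k}` in `{0, …, bₖ - 1}`. So the hooks of that row
together with the differences `bₖ - bⱼ` (`j < k`) are exactly `1, …, bₖ`, and taking the
product over all rows gives Frobenius' formula `H_Y · ∏_{i<j} (bⱼ - bᵢ) = ∏ᵢ bᵢ!`.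
On the determinant side, `1/(bᵢ - j)! = bᵢ(bᵢ - 1)⋯(bᵢ - j + 1)/bᵢ!`, and the falling
factorial polynomials are monic of degree `j`, so the determinant is `∏ᵢ 1/bᵢ!` times the
Vandermonde determinant of the `bᵢ`.
-/

open Finset

section

variable {n : ℕ}

/-- Row `i` has `len i` boxes and is the `i`-th row from the bottom, as the rows of `cellsOf`. -/
def diagramOfRows (len : Fin n → ℕ) : Finset (ℕ × ℕ) :=
  univ.biUnion fun i => (range (len i)).image fun c => ((i.rev : ℕ), c)

theorem mem_diagramOfRows {len : Fin n → ℕ} {u : ℕ × ℕ} :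
    u ∈ diagramOfRows len ↔ ∃ i : Fin n, (i.rev : ℕ) = u.1 ∧ u.2 < len i := by
  obtain ⟨r, c⟩ := u
  simp only [diagramOfRows, mem_biUnion, mem_univ, true_and, mem_image, mem_range,
    Prod.mk.injEq]
  constructor
  · rintro ⟨i, c, hc, rfl, rfl⟩
    exact ⟨i, rfl, hc⟩
  · rintro ⟨i, rfl, hc⟩
    exact ⟨i, c, hc, rfl, rfl⟩

theorem hookLen_diagramOfRows (len : Fin n → ℕ) (i : Fin n) (c : ℕ) :
    hookLen (diagramOfRows len) ((i.rev : ℕ), c) = len i - c + #{j ∈ Iio i | c < len j} := by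
  have harm : {v ∈ diagramOfRows len | v.1 = (i.rev : ℕ) ∧ c ≤ v.2} =
      (Ico c (len i)).image fun c' => ((i.rev : ℕ), c') := by
    ext ⟨r, c'⟩
    simp only [mem_filter, mem_diagramOfRows, mem_image, mem_Ico, Prod.mk.injEq]
    constructor
    · rintro ⟨⟨j, rfl, hj⟩, hji, hc⟩
      obtain rfl : j = i := Fin.rev_injective (Fin.ext hji)
      exact ⟨c', ⟨hc, hj⟩, rfl, rfl⟩
    · rintro ⟨c', ⟨hc, hi⟩, rfl, rfl⟩
      exact ⟨⟨i, rfl, hi⟩, rfl, hc⟩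
  have hleg : {v ∈ diagramOfRows len | v.2 = c ∧ (i.rev : ℕ) < v.1} =
      {j ∈ Iio i | c < len j}.image fun j => ((j.rev : ℕ), c) := by
    ext ⟨r, c'⟩
    simp only [mem_filter, mem_diagramOfRows, mem_image, mem_Iio, Prod.mk.injEq]
    constructor
    · rintro ⟨⟨j, rfl, hj⟩, rfl, hji⟩
      exact ⟨j, ⟨Fin.rev_lt_rev.mp hji, hj⟩, rfl, rfl⟩
    · rintro ⟨j, ⟨hji, hj⟩, rfl, rfl⟩
      exact ⟨⟨j, rfl, hj⟩, rfl, Fin.rev_lt_rev.mpr hji⟩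
  unfold hookLen
  rw [harm, hleg, card_image_of_injective _ (fun _ _ h => (Prod.mk.inj h).2),
    card_image_of_injective _ (fun _ _ h => Fin.rev_injective (Fin.ext (Prod.mk.inj h).1)),
    Nat.card_Ico]

theorem hookProd_diagramOfRows (len : Fin n → ℕ) :
    hookProd (diagramOfRows len) =
      ∏ i, ∏ c ∈ range (len i), (len i - c + #{j ∈ Iio i | c < len j}) := by
  rw [hookProd, diagramOfRows, prod_biUnion]
  · refine prod_congr rfl fun i _ => ?_
    rw [prod_image fun _ _ _ _ h => (Prod.mk.inj h).2]
    exact prod_congr rfl fun c _ => hookLen_diagramOfRows len i c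
  · intro i _ j _ hij
    simp only [Function.onFun, disjoint_left, mem_image]
    rintro _ ⟨c, -, rfl⟩ ⟨c', -, h⟩
    exact hij (Fin.rev_injective (Fin.ext (Prod.mk.inj h).1)).symm

theorem cellsOf_eq_diagramOfRows {a : Fin n → ℕ} (ha : ∀ i : Fin n, a i ≤ 2 * (i : ℕ) + 1) :
    cellsOf n a = diagramOfRows fun i => a i - 1 - i := by
  ext ⟨r, c⟩
  rw [cellsOf, mem_filter]
  simp only [mem_product, mem_range, mem_diagramOfRows, Fin.val_rev, extSeq]
  constructor
  · rintro ⟨⟨hr, -⟩, hc⟩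
    refine ⟨⟨n - 1 - r, by omega⟩, by simp; omega, ?_⟩
    rw [dif_pos (by omega)] at hc
    simp only
    omega
  · rintro ⟨i, rfl, hc⟩
    have := ha i
    have hi : n - 1 - (n - (i + 1)) = i := by omega
    simp only [hi, dif_pos i.isLt, Fin.eta]
    omega

theorem Fin.add_sub_le_of_strictMono {b : Fin n → ℕ} (hb : StrictMono b) {i j : Fin n}
    (hij : i ≤ j) : b i + (j - i) ≤ b j := by
  have hsub : (Icc i j).image b ⊆ Icc (b i) (b j) := by
    simp only [subset_iff, mem_image, mem_Icc]
    rintro _ ⟨k, ⟨hik, hkj⟩, rfl⟩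
    exact ⟨hb.monotone hik, hb.monotone hkj⟩
  have := card_le_card hsub
  rw [card_image_of_injective _ hb.injective, Fin.card_Icc, Nat.card_Icc] at this
  have := hb.monotone hij
  have : (i : ℕ) ≤ j := hij
  omega

theorem strictMono_add_card_filter_le {α : Type*} (s : Finset α) (f : α → ℕ) :
    StrictMono fun c => c + #{x ∈ s | f x ≤ c} := fun c c' hcc' => by
  have : #{x ∈ s | f x ≤ c} ≤ #{x ∈ s | f x ≤ c'} :=
    card_le_card (monotone_filter_right _ fun _ _ hx => hx.trans hcc'.le)
  dsimp only
  omega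

section Row

variable {b : Fin n → ℕ}

theorem image_Iio_subset_range (hb : StrictMono b) (k : Fin n) :
    (Iio k).image b ⊆ range (b k) := by
  simp only [subset_iff, mem_image, mem_Iio, mem_range]
  rintro _ ⟨j, hj, rfl⟩
  exact hb hj

theorem image_range_eq_sdiff_image (hb : StrictMono b) (k : Fin n) :
    (range (b k - k)).image (fun c => c + #{j ∈ Iio k | b j - j ≤ c}) =
      range (b k) \ (Iio k).image b := by
  set g : ℕ → ℕ := fun c => c + #{j ∈ Iio k | b j - j ≤ c}
  have hgap {i j : Fin n} (hij : i ≤ j) : b i - i ≤ b j - j := by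
    have := Fin.add_sub_le_of_strictMono hb hij
    have : (i : ℕ) ≤ j := hij
    omega
  have hlt (c : ℕ) (hc : c < b k - k) : g c < b k := by
    have : #{j ∈ Iio k | b j - j ≤ c} ≤ k := (card_filter_le _ _).trans (Fin.card_Iio k).le
    simp only [g]
    omega
  -- `{i ∈ Iio k | b i - i ≤ c}` is an initial segment, so it contains `Iic j` or lies in `Iio j`.
  have hne (c : ℕ) (j : Fin n) (hj : j < k) : g c ≠ b j := by
    by_cases hjc : b j - j ≤ c
    · have hsub : Iic j ⊆ {i ∈ Iio k | b i - i ≤ c} := fun i hi => by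
        rw [mem_Iic] at hi
        exact mem_filter.mpr ⟨mem_Iio.mpr (hi.trans_lt hj), (hgap hi).trans hjc⟩
      have := card_le_card hsub
      rw [Fin.card_Iic] at this
      simp only [g]
      omega
    · have hsub : {i ∈ Iio k | b i - i ≤ c} ⊆ Iio j := fun i hi => by
        rw [mem_filter] at hi
        exact mem_Iio.mpr (lt_of_not_ge fun hji => hjc ((hgap hji).trans hi.2))
      have := card_le_card hsub
      rw [Fin.card_Iio] at this
      simp only [g]
      omega
  refine eq_of_subset_of_card_le ?_ ?_
  · simp only [subset_iff, mem_image, mem_range, mem_sdiff, mem_Iio, not_exists, not_and]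
    rintro _ ⟨c, hc, rfl⟩
    exact ⟨hlt c hc, fun j hj => (hne c j hj).symm⟩
  · rw [card_sdiff_of_subset (image_Iio_subset_range hb k), card_image_of_injective _ hb.injective,
      card_image_of_injective _ (strictMono_add_card_filter_le _ _).injective, Fin.card_Iio,
      card_range, card_range]

theorem prod_rowHook_mul_prod_sub_eq_factorial (hb : StrictMono b) (k : Fin n) :
    (∏ c ∈ range (b k - k), (b k - k - c + #{j ∈ Iio k | c < b j - j})) *
      ∏ j ∈ Iio k, (b k - b j) = (b k).factorial := by
  set g : ℕ → ℕ := fun c => c + #{j ∈ Iio k | b j - j ≤ c}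
  have hhook (c : ℕ) (hc : c ∈ range (b k - k)) :
      b k - k - c + #{j ∈ Iio k | c < b j - j} = b k - g c := by
    have := card_filter_add_card_filter_not (s := Iio k) (fun j => b j - j ≤ c)
    simp only [not_le, Fin.card_Iio] at this
    rw [mem_range] at hc
    simp only [g]
    omega
  calc _ = (∏ c ∈ range (b k - k), (b k - g c)) * ∏ t ∈ (Iio k).image b, (b k - t) := by
        rw [prod_congr rfl hhook, prod_image hb.injective.injOn]
    _ = ∏ t ∈ range (b k), (b k - t) := by
        rw [← prod_image (strictMono_add_card_filter_le _ _).injective.injOn,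
          image_range_eq_sdiff_image hb, prod_sdiff (image_Iio_subset_range hb k)]
    _ = (b k).factorial := by rw [← Nat.descFactorial_eq_prod_range, Nat.descFactorial_self]

end Row

theorem hookProd_mul_prod_sub_eq_prod_factorial {b : Fin n → ℕ} (hb : StrictMono b) :
    hookProd (diagramOfRows fun i => b i - i) * ∏ i, ∏ j ∈ Ioi i, (b j - b i) =
      ∏ i, (b i).factorial := by
  rw [hookProd_diagramOfRows, prod_comm' (t' := univ) (s' := Iio) (by simp), ← prod_mul_distrib]
  exact prod_congr rfl fun k _ => prod_rowHook_mul_prod_sub_eq_factorial hb k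

theorem one_div_hookProd_diagramOfRows {K : Type*} [Field K] [CharZero K] {b : Fin n → ℕ}
    (hb : StrictMono b) :
    (1 : K) / hookProd (diagramOfRows fun i => b i - i) =
      (∏ i, ((b i).factorial : K)⁻¹) * ∏ i, ∏ j ∈ Ioi i, ((b j : K) - b i) := by
  have hkey := congrArg (Nat.cast : ℕ → K) (hookProd_mul_prod_sub_eq_prod_factorial hb)
  simp only [Nat.cast_mul, Nat.cast_prod] at hkey
  rw [prod_congr rfl fun i _ => prod_congr rfl fun j hj =>
    Nat.cast_sub (hb.monotone (mem_Ioi.mp hj).le)] at hkey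
  have hF : ∏ i, ((b i).factorial : K) ≠ 0 := prod_ne_zero_iff.mpr fun i _ =>
    Nat.cast_ne_zero.mpr (Nat.factorial_ne_zero _)
  rw [← hkey] at hF
  rw [prod_inv_distrib, ← hkey, mul_inv, mul_assoc, inv_mul_cancel₀ (right_ne_zero_of_mul hF),
    mul_one, one_div]

theorem Matrix.det_descFactorial {R : Type*} [CommRing R] [IsDomain R] (b : Fin n → ℕ) :
    (Matrix.of fun i j : Fin n => ((b i).descFactorial j : R)).det =
      ∏ i, ∏ j ∈ Ioi i, ((b j : R) - b i) := by
  rw [← det_vandermonde, det_eval_matrixOfPolynomials_eq_det_vandermonde _ (descPochhammer R ·)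
    (fun j => descPochhammer_natDegree (R := R) j) (fun j => monic_descPochhammer R j)]
  simp only [descPochhammer_eval_eq_descFactorial]

theorem one_div_factorial_sub_eq_descFactorial_div {K : Type*} [Field K] [CharZero K] (m j : ℕ) :
    (if j ≤ m then 1 / ((m - j).factorial : K) else 0) = m.descFactorial j / m.factorial := by
  split_ifs with hjm
  · have : (m.descFactorial j : K) ≠ 0 := Nat.cast_ne_zero.mpr (Nat.descFactorial_pos.mpr hjm).ne'
    rw [← Nat.factorial_mul_descFactorial hjm, Nat.cast_mul, div_mul_cancel_right₀ this, one_div]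
  · rw [Nat.descFactorial_eq_zero_iff_lt.mpr (not_le.mp hjm), Nat.cast_zero, zero_div]

end

/-- For `a₁ < ⋯ < aₙ` positive with `aᵢ ≤ 2i - 1`, `1/H_{Y(a)}` equals the `n × n`
determinant with `(i,j)` entry `1/(aᵢ - j)!` (interpreted as `0` when `aᵢ - j < 0`). -/
theorem one_div_hookProd_eq_det (n : ℕ) (a : Fin n → ℕ) (ha : StrictMono a)
    (h1 : ∀ i, 1 ≤ a i) (h2 : ∀ i : Fin n, a i ≤ 2 * (i : ℕ) + 1) :
    (1 : ℚ) / hookProd (cellsOf n a) =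
    Matrix.det (Matrix.of fun i j : Fin n =>
      if (j : ℕ) + 1 ≤ a i then (1 : ℚ) / ((a i - ((j : ℕ) + 1)).factorial) else 0) := by
  set b : Fin n → ℕ := fun i => a i - 1
  have hb : StrictMono b := fun i j hij => by
    have := ha hij
    have := h1 i
    simp only [b]
    omega
  have hentry (i j : Fin n) :
      ((b i).factorial : ℚ)⁻¹ * (b i).descFactorial j =
        if (j : ℕ) + 1 ≤ a i then (1 : ℚ) / ((a i - ((j : ℕ) + 1)).factorial) else 0 := by
    rw [inv_mul_eq_div, ← one_div_factorial_sub_eq_descFactorial_div]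
    simp only [b, Nat.sub_sub, add_comm 1, Nat.le_sub_iff_add_le (h1 i)]
  calc (1 : ℚ) / hookProd (cellsOf n a)
      = (∏ i, ((b i).factorial : ℚ)⁻¹) * ∏ i, ∏ j ∈ Ioi i, ((b j : ℚ) - b i) := by
        rw [cellsOf_eq_diagramOfRows h2, one_div_hookProd_diagramOfRows hb]
    _ = (Matrix.of fun i j => ((b i).factorial : ℚ)⁻¹ *
          Matrix.of (fun i j : Fin n => ((b i).descFactorial j : ℚ)) i j).det := by
        rw [Matrix.det_mul_column, Matrix.det_descFactorial]
    _ = _ := congrArg _ (congrArg _ (funext₂ hentry))
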